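/- arXiv:1711.08082 — 7 statements merged into one kernel-verified Lean document; each statement's English description precedes it below -/
import Mathlib

section
/- For every positive integer n and every real x ≥ 0, the probability that the sum of squares of the coordinates of z exceeds n + 2√(n·x) + 2x is at most exp(−x); that is, P(∑_{i=1}^n z_i² ≥ n + 2√(n x) + 2x) ≤ exp(−x). -/
open MeasureTheory ProbabilityTheory

/-- The law of a random vector of `n` i.i.d. standard real Gaussians. -/
noncomputable def stdGaussianPi (n : ℕ) : Measure (Fin n → ℝ) :=
  Measure.pi fun _ => gaussianReal 0 1

/-!
Chernoff's method. For `0 ≤ t < 1/2` the moment generating function of `χ²_n` is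
`(1 - 2t)^(-n/2)`, so `P(χ²_n ≥ a) ≤ e^(-ta) (1 - 2t)^(-n/2)`. Writing `x = n s²`, the
threshold is `a = n (1 + 2s + 2s²)`, and the choice `t = s / (1 + 2s)`, for which
`1 - 2t = (1 + 2s)⁻¹`, reduces the claim to `log √(1 + 2s) ≤ s (1 + s) / (1 + 2s)`. That follows
from `log u ≤ sinh (log u) = (u - u⁻¹) / 2` for `u = √(1 + 2s) ≥ 1` together with `u ≤ 1 + s`.
-/

open Real

lemma log_le_sub_inv_div_two {u : ℝ} (hu : 1 ≤ u) : log u ≤ (u - u⁻¹) / 2 := by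
  rw [← sinh_log (by positivity)]
  exact self_le_sinh_iff.mpr (log_nonneg hu)

lemma log_sqrt_one_add_two_mul_le {s : ℝ} (hs : 0 ≤ s) :
    log √(1 + 2 * s) ≤ s * (1 + s) / (1 + 2 * s) := by
  set u := √(1 + 2 * s)
  have hu2 : u ^ 2 = 1 + 2 * s := sq_sqrt (by positivity)
  have hu1 : 1 ≤ u := one_le_sqrt.mpr (by linarith)
  have hu_le : u ≤ 1 + s := sqrt_le_iff.mpr ⟨by positivity, by nlinarith⟩
  calc log u ≤ (u - u⁻¹) / 2 := log_le_sub_inv_div_two hu1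
    _ = s / u := by field_simp; linear_combination hu2
    _ ≤ s * (1 + s) / (1 + 2 * s) := by
      rw [div_le_div_iff₀ (by positivity) (by positivity)]
      nlinarith [mul_le_mul_of_nonneg_left hu_le (mul_nonneg hs (by positivity : 0 ≤ u))]

/-- For `t ≥ 1/2` both sides are junk zeros: the integrand is not integrable and `√` of a
nonpositive number is `0`. -/
lemma integral_exp_mul_sq_gaussianReal (t : ℝ) :
    ∫ x, exp (t * x ^ 2) ∂gaussianReal 0 1 = (√(1 - 2 * t))⁻¹ := by
  have hdensity : ∀ x : ℝ, gaussianPDFReal 0 1 x • exp (t * x ^ 2)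
      = (√(2 * π))⁻¹ * exp (-(1 / 2 - t) * x ^ 2) := by
    intro x
    rw [gaussianPDFReal, smul_eq_mul, mul_assoc, ← exp_add]
    push_cast
    ring_nf
  simp_rw [integral_gaussianReal_eq_integral_smul one_ne_zero, hdensity, integral_const_mul,
    integral_gaussian]
  rw [← sqrt_inv, ← sqrt_mul (by positivity), ← sqrt_inv]
  congr 1
  field_simp

lemma integral_exp_mul_sum_sq_pi_gaussianReal {ι : Type*} [Fintype ι] (t : ℝ) :
    ∫ z : ι → ℝ, exp (t * ∑ i, z i ^ 2) ∂Measure.pi (fun _ => gaussianReal 0 1)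
      = (√(1 - 2 * t))⁻¹ ^ Fintype.card ι := by
  simp_rw [Finset.mul_sum, exp_sum]
  rw [integral_fintype_prod_eq_pow (fun x => exp (t * x ^ 2)), integral_exp_mul_sq_gaussianReal t]

instance isProbabilityMeasure_stdGaussianPi (n : ℕ) : IsProbabilityMeasure (stdGaussianPi n) := by
  unfold stdGaussianPi; infer_instance

lemma mgf_sum_sq_stdGaussianPi (n : ℕ) (t : ℝ) :
    mgf (fun z => ∑ i, z i ^ 2) (stdGaussianPi n) t = (√(1 - 2 * t))⁻¹ ^ n := by
  rw [mgf, stdGaussianPi, integral_exp_mul_sum_sq_pi_gaussianReal t, Fintype.card_fin]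

lemma measureReal_sum_sq_ge_le_exp_mul (n : ℕ) {t : ℝ} (ht₀ : 0 ≤ t) (ht : t < 1 / 2)
    (a : ℝ) :
    (stdGaussianPi n).real {z | a ≤ ∑ i, z i ^ 2} ≤ exp (-t * a) * (√(1 - 2 * t))⁻¹ ^ n := by
  have hmgf := mgf_sum_sq_stdGaussianPi n t
  have hint : Integrable (fun z => exp (t * ∑ i, z i ^ 2)) (stdGaussianPi n) :=
    .of_integral_ne_zero <| by
      rw [← mgf, hmgf]
      exact pow_ne_zero _ (inv_ne_zero (sqrt_ne_zero'.mpr (by linarith)))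
  exact hmgf ▸ measure_ge_le_exp_mul_mgf a ht₀ hint

lemma exp_neg_mul_mul_inv_sqrt_pow_le (n : ℕ) {s : ℝ} (hs : 0 ≤ s) :
    exp (-(s / (1 + 2 * s)) * (n * (1 + 2 * s + 2 * s ^ 2)))
        * (√(1 - 2 * (s / (1 + 2 * s))))⁻¹ ^ n ≤ exp (-(n * s ^ 2)) := by
  have h_sqrt : (√(1 - 2 * (s / (1 + 2 * s))))⁻¹ = exp (log √(1 + 2 * s)) := by
    rw [exp_log (by positivity), ← sqrt_inv]
    congr 1
    field_simp
    ring
  rw [h_sqrt, ← exp_nat_mul, ← exp_add, exp_le_exp]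
  have h_log := mul_le_mul_of_nonneg_left (log_sqrt_one_add_two_mul_le hs) n.cast_nonneg
  have h_split :
      s * (1 + s) / (1 + 2 * s) = s / (1 + 2 * s) * (1 + 2 * s + 2 * s ^ 2) - s ^ 2 := by
    field_simp
    ring
  rw [h_split] at h_log
  linarith

/-- Upper tail bound for the chi-squared distribution with `n` degrees of freedom
(Laurent–Massart): `P(χ²_n ≥ n + 2√(n x) + 2 x) ≤ exp (-x)`. -/
theorem chiSq_upper_tail (n : ℕ) (hn : 0 < n) (x : ℝ) (hx : 0 ≤ x) :
    stdGaussianPi n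
        {z | (n : ℝ) + 2 * Real.sqrt (n * x) + 2 * x ≤ ∑ i, z i ^ 2}
      ≤ ENNReal.ofReal (Real.exp (-x)) := by
  set s := √(x / n)
  have hs : 0 ≤ s := sqrt_nonneg _
  have hx_eq : x = n * s ^ 2 := by
    rw [sq_sqrt (by positivity)]
    field_simp
  have h_thr : (n : ℝ) + 2 * √(n * x) + 2 * x = n * (1 + 2 * s + 2 * s ^ 2) := by
    rw [hx_eq, show (n : ℝ) * (n * s ^ 2) = (n * s) ^ 2 by ring, sqrt_sq (by positivity)]
    ring
  have ht : s / (1 + 2 * s) < 1 / 2 := by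
    rw [div_lt_iff₀ (by positivity)]
    linarith
  rw [← ofReal_measureReal, h_thr, hx_eq]
  gcongr
  exact (measureReal_sum_sq_ge_le_exp_mul n (by positivity) ht _).trans
    (exp_neg_mul_mul_inv_sqrt_pow_le n hs)
end

section
/- For every positive integer n and every real t ≥ n, P(∑_{i=1}^n z_i² ≥ t) ≤ exp(−(√(2t − n) − √n)² / 4). -/
/-!
Chernoff's bound with the exact moment generating function `E[exp (s z²)] = (1 - 2s)^(-1/2)`
of a squared standard Gaussian gives `P(χ²_n ≥ t) ≤ exp (-s t) (1 - 2s)^(-n/2)` for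
`0 ≤ s < 1/2`. The choice `1 - 2s = n/t` turns this into `exp (-(t - n)/2) (t/n)^(n/2)`, and with
`u = t/n` the claimed bound reduces to the scalar inequality `log u + 1 ≤ √(2u - 1)` for `u ≥ 1`.
-/

open MeasureTheory ProbabilityTheory

instance (n : ℕ) : IsProbabilityMeasure (stdGaussianPi n) := by
  unfold stdGaussianPi
  infer_instance

open Real

section ProductMGF

variable {Ω ι : Type*} [MeasurableSpace Ω] [Fintype ι] {μ : Measure Ω} [SigmaFinite μ]
  {X : Ω → ℝ} {t : ℝ}

lemma integrable_exp_mul_sum_pi (h : Integrable (fun x => exp (t * X x)) μ) :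
    Integrable (fun z : ι → Ω => exp (t * ∑ i, X (z i))) (Measure.pi fun _ => μ) := by
  simpa only [Finset.mul_sum, exp_sum] using Integrable.fintype_prod (μ := fun _ => μ) fun _ => h

lemma mgf_sum_pi :
    mgf (fun z : ι → Ω => ∑ i, X (z i)) (Measure.pi fun _ => μ) t
      = mgf X μ t ^ Fintype.card ι := by
  simp only [mgf, Finset.mul_sum, exp_sum]
  exact integral_fintype_prod_eq_pow (ι := ι) (μ := μ) (fun x => exp (t * X x))

end ProductMGF

lemma gaussianPDFReal_mul_exp_mul_sq (s x : ℝ) :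
    gaussianPDFReal 0 1 x * exp (s * x ^ 2) = (√(2 * π))⁻¹ * exp (-(1 / 2 - s) * x ^ 2) := by
  rw [gaussianPDFReal, mul_assoc, ← exp_add]
  congr 2
  · simp
  · push_cast
    ring

lemma integrable_exp_mul_sq_gaussianReal {s : ℝ} (hs : s < 1 / 2) :
    Integrable (fun x => exp (s * x ^ 2)) (gaussianReal 0 1) := by
  rw [gaussianReal_of_var_ne_zero 0 one_ne_zero, integrable_withDensity_iff
    (measurable_gaussianPDF 0 1) (ae_of_all _ fun _ => gaussianPDF_lt_top)]
  simp only [toReal_gaussianPDF, mul_comm (exp _), gaussianPDFReal_mul_exp_mul_sq]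
  exact (integrable_exp_neg_mul_sq (by linarith)).const_mul _

-- For `s ≥ 1 / 2` both sides are junk values `0`.
lemma mgf_sq_gaussianReal (s : ℝ) :
    mgf (fun x => x ^ 2) (gaussianReal 0 1) s = (√(1 - 2 * s))⁻¹ := by
  rw [mgf, integral_gaussianReal_eq_integral_smul one_ne_zero]
  simp only [smul_eq_mul, gaussianPDFReal_mul_exp_mul_sq]
  rw [integral_const_mul, integral_gaussian, ← sqrt_inv, ← sqrt_inv, ← sqrt_mul (by positivity)]
  congr 1
  field_simp

lemma log_add_one_le_sqrt_two_mul_sub_one {u : ℝ} (hu : 1 ≤ u) : log u + 1 ≤ √(2 * u - 1) := by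
  set v := √(2 * u - 1)
  have hv2 : v ^ 2 = 2 * u - 1 := sq_sqrt (by linarith)
  have hv1 : 1 ≤ v := one_le_sqrt.mpr (by linarith)
  -- `u = 1 + (v - 1) + (v - 1)² / 2 ≤ exp (v - 1)`
  have : u ≤ exp (v - 1) := by
    nlinarith [quadratic_le_exp_of_nonneg (x := v - 1) (by linarith)]
  linarith [(log_le_iff_le_exp (by linarith)).mpr this]

lemma exp_neg_half_sub_mul_sqrt_div_pow_le (n : ℕ) (hn : 0 < n) (t : ℝ) (ht : (n : ℝ) ≤ t) :
    exp (-((t - n) / 2)) * √(t / n) ^ n ≤ exp (-((√(2 * t - n) - √n) ^ 2 / 4)) := by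
  have hn' : (0 : ℝ) < n := Nat.cast_pos.mpr hn
  have hu : 1 ≤ t / n := (one_le_div hn').mpr ht
  have hpow : √(t / n) ^ n = exp (n * (log (t / n) / 2)) := by
    rw [exp_nat_mul, ← log_sqrt (by linarith), exp_log (sqrt_pos.mpr (by linarith))]
  have hsq : (√(2 * t - n) - √n) ^ 2 = 2 * t - 2 * n * √(2 * (t / n) - 1) := by
    have : 2 * (t / n) - 1 = (2 * t - n) * n / n ^ 2 := by field_simp
    rw [this, sqrt_div' _ (by positivity), sqrt_sq hn'.le, sqrt_mul (by linarith),
      sub_sq, sq_sqrt (by linarith), sq_sqrt hn'.le]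
    field_simp
    ring
  rw [hpow, ← exp_add, exp_le_exp, hsq]
  nlinarith [log_add_one_le_sqrt_two_mul_sub_one hu]

/-- Upper tail bound for the chi-squared distribution with `n` degrees of freedom:
for `t ≥ n`, `P(χ²_n ≥ t) ≤ exp (-(√(2t - n) - √n)² / 4)`. -/
theorem chiSq_upper_tail' (n : ℕ) (hn : 0 < n) (t : ℝ) (ht : (n : ℝ) ≤ t) :
    stdGaussianPi n {z | t ≤ ∑ i, z i ^ 2}
      ≤ ENNReal.ofReal
          (Real.exp (-((Real.sqrt (2 * t - n) - Real.sqrt n) ^ 2 / 4))) := by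
  have hn' : (0 : ℝ) < n := Nat.cast_pos.mpr hn
  have ht' : 0 < t := hn'.trans_le ht
  -- the optimal Chernoff parameter for `χ²_n` at level `t`
  set s := (1 - n / t) / 2 with hs_def
  have h2s : 1 - 2 * s = n / t := by ring
  have hs0 : 0 ≤ s := by linarith [(div_le_one ht').mpr ht]
  have hs : s < 1 / 2 := by linarith [div_pos hn' ht']
  rw [← ofReal_measureReal]
  gcongr
  calc _ ≤ exp (-s * t) * mgf (fun z : Fin n → ℝ => ∑ i, z i ^ 2) (stdGaussianPi n) s :=
        measure_ge_le_exp_mul_mgf t hs0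
          (integrable_exp_mul_sum_pi (X := fun x => x ^ 2) (integrable_exp_mul_sq_gaussianReal hs))
    _ = exp (-((t - n) / 2)) * √(t / n) ^ n := by
        rw [stdGaussianPi, mgf_sum_pi (X := fun x => x ^ 2), mgf_sq_gaussianReal, Fintype.card_fin,
          h2s, ← sqrt_inv, inv_div, hs_def]
        field_simp
    _ ≤ _ := exp_neg_half_sub_mul_sqrt_div_pow_le n hn t ht
end

section
/- For every positive integer n, every vector a ∈ ℝⁿ with λ := ∑_{i=1}^n a_i², and every real x ≥ 0, P(∑_{i=1}^n (z_i + a_i)² ≥ (n + λ) + 2√((n + 2λ) x) + 2x) ≤ exp(−x). -/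
/-!
Chernoff bound. Completing the square against the Gaussian density gives
`E exp (t (z + a)²) = (1 - 2t)^(-1/2) exp (t a² / (1 - 2t))` for `t < 1/2`, and
`-½ log (1 - 2t) ≤ t + t² / (1 - 2t)`, so the log-mgf of `∑ (zᵢ + aᵢ)²` is at most
`t (n + λ) + 2 (n + 2λ) t² / (2 (1 - 2t))`: the variable is sub-gamma with variance factor
`ν = 2 (n + 2λ)` and scale `c = 2`. For such a variable, Markov's inequality for `exp (t X)` at
`t = √(2x) / (√ν + c √(2x))` gives exactly `P(X ≥ m + √(2νx) + cx) ≤ exp (-x)`.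
-/

open MeasureTheory ProbabilityTheory Real

instance inst_s3 (n : ℕ) : IsProbabilityMeasure (stdGaussianPi n) := by
  unfold stdGaussianPi
  infer_instance

theorem measure_ge_le_exp_neg_of_subGamma_mgf {Ω : Type*} {mΩ : MeasurableSpace Ω}
    {μ : Measure Ω} [IsFiniteMeasure μ] {X : Ω → ℝ} {m ν c x : ℝ}
    (hν : 0 < ν) (hc : 0 ≤ c) (hx : 0 ≤ x)
    (h_int : ∀ t, 0 ≤ t → c * t < 1 → Integrable (fun ω => exp (t * X ω)) μ)
    (h_mgf : ∀ t, 0 ≤ t → c * t < 1 → mgf X μ t ≤ exp (t * m + ν * t ^ 2 / (2 * (1 - c * t)))) :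
    μ {ω | m + √(2 * ν * x) + c * x ≤ X ω} ≤ ENNReal.ofReal (exp (-x)) := by
  set w := √ν
  set r := √(2 * x) with hr_def
  have hw : 0 < w := sqrt_pos.mpr hν
  have hr : 0 ≤ r := sqrt_nonneg _
  have hνw : ν = w ^ 2 := (sq_sqrt hν.le).symm
  have hxr : x = r ^ 2 / 2 := by rw [hr_def, sq_sqrt (by positivity)]; ring
  have hD : 0 < w + c * r := by positivity
  set t := r / (w + c * r) with ht_def
  have ht0 : 0 ≤ t := by positivity
  have hct : 1 - c * t = w / (w + c * r) := by rw [ht_def]; field_simp; ring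
  have hct1 : c * t < 1 := by
    have : 0 < 1 - c * t := by rw [hct]; positivity
    linarith
  have hνx : √(2 * ν * x) = w * r := by rw [mul_right_comm, sqrt_mul' _ (by positivity)]; ring
  have hexp : -t * (m + w * r + c * x) + (t * m + ν * t ^ 2 / (2 * (1 - c * t))) = -x := by
    rw [hct, hνw, hxr, ht_def]
    field_simp
    ring
  rw [ENNReal.le_ofReal_iff_toReal_le (measure_ne_top _ _) (exp_nonneg _), ← measureReal_def]
  calc μ.real {ω | m + √(2 * ν * x) + c * x ≤ X ω}
      ≤ exp (-t * (m + √(2 * ν * x) + c * x)) * mgf X μ t :=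
        measure_ge_le_exp_mul_mgf _ ht0 (h_int t ht0 hct1)
    _ ≤ exp (-t * (m + √(2 * ν * x) + c * x)) * exp (t * m + ν * t ^ 2 / (2 * (1 - c * t))) := by
        gcongr
        exact h_mgf t ht0 hct1
    _ = exp (-x) := by rw [← exp_add, hνx, hexp]

theorem inv_one_sub_le_exp {u : ℝ} (hu0 : 0 ≤ u) (hu1 : u < 1) :
    (1 - u)⁻¹ ≤ exp (u + u ^ 2 / (2 * (1 - u))) := by
  have hpos : 0 < 1 - u := by linarith
  have hquad : 1 + u + u ^ 2 / 2 ≤ exp u := quadratic_le_exp_of_nonneg hu0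
  have hlin : 1 + u ^ 2 / (2 * (1 - u)) ≤ exp (u ^ 2 / (2 * (1 - u))) := by
    linarith [add_one_le_exp (u ^ 2 / (2 * (1 - u)))]
  have hprod : (1 - u) * ((1 + u + u ^ 2 / 2) * (1 + u ^ 2 / (2 * (1 - u)))) = 1 + u ^ 4 / 4 := by
    field_simp
    ring
  rw [exp_add, inv_le_iff_one_le_mul₀' hpos]
  calc 1 ≤ 1 + u ^ 4 / 4 := by linarith [pow_nonneg hu0 4]
    _ = (1 - u) * ((1 + u + u ^ 2 / 2) * (1 + u ^ 2 / (2 * (1 - u)))) := hprod.symm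
    _ ≤ (1 - u) * (exp u * exp (u ^ 2 / (2 * (1 - u)))) := by gcongr

theorem inv_sqrt_one_sub_two_mul_le_exp {t : ℝ} (ht0 : 0 ≤ t) (ht : t < 1 / 2) :
    (√(1 - 2 * t))⁻¹ ≤ exp (t + t ^ 2 / (1 - 2 * t)) := by
  rw [← sqrt_inv, sqrt_le_left (exp_nonneg _), ← exp_nat_mul]
  convert inv_one_sub_le_exp (u := 2 * t) (by positivity) (by linarith) using 2
  field_simp
  ring

theorem gaussianPDFReal_mul_exp_mul_add_sq {t : ℝ} (ht : t < 1 / 2) (a z : ℝ) :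
    gaussianPDFReal 0 1 z * exp (t * (z + a) ^ 2)
      = (√(2 * π))⁻¹ * exp (t * a ^ 2 / (1 - 2 * t))
          * exp (-((1 - 2 * t) / 2) * (z - 2 * t * a / (1 - 2 * t)) ^ 2) := by
  have hpos : 0 < 1 - 2 * t := by linarith
  simp only [gaussianPDFReal, NNReal.coe_one, mul_one, sub_zero]
  rw [mul_assoc, ← exp_add, mul_assoc, ← exp_add]
  congr 2
  field_simp
  ring

theorem integral_exp_mul_add_sq_gaussianReal {t : ℝ} (ht : t < 1 / 2) (a : ℝ) :
    ∫ z, exp (t * (z + a) ^ 2) ∂gaussianReal 0 1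
      = (√(1 - 2 * t))⁻¹ * exp (t * a ^ 2 / (1 - 2 * t)) := by
  have hconst : (√(2 * π))⁻¹ * √(π / ((1 - 2 * t) / 2)) = (√(1 - 2 * t))⁻¹ := by
    rw [← sqrt_inv, ← sqrt_mul (by positivity), ← sqrt_inv]
    congr 1
    field_simp [pi_pos.ne']
  simp_rw [integral_gaussianReal_eq_integral_smul one_ne_zero, smul_eq_mul,
    gaussianPDFReal_mul_exp_mul_add_sq ht, integral_const_mul,
    integral_sub_right_eq_self (fun u => exp (-((1 - 2 * t) / 2) * u ^ 2)), integral_gaussian]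
  rw [mul_right_comm, hconst]

section Pi

variable {ι : Type*} [Fintype ι]

theorem integral_exp_mul_sum_sq_add_pi {t : ℝ} (ht : t < 1 / 2) (a : ι → ℝ) :
    ∫ z, exp (t * ∑ i, (z i + a i) ^ 2) ∂Measure.pi (fun _ : ι => gaussianReal 0 1)
      = (√(1 - 2 * t))⁻¹ ^ Fintype.card ι * exp (t * (∑ i, a i ^ 2) / (1 - 2 * t)) := by
  simp_rw [Finset.mul_sum, exp_sum]
  rw [integral_fintype_prod_eq_prod (fun i y => exp (t * (y + a i) ^ 2))]
  simp_rw [integral_exp_mul_add_sq_gaussianReal ht, Finset.prod_mul_distrib, Finset.prod_const,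
    ← exp_sum, Finset.sum_div, Finset.card_univ]

theorem integrable_exp_mul_sum_sq_add_pi {t : ℝ} (ht : t < 1 / 2) (a : ι → ℝ) :
    Integrable (fun z : ι → ℝ => exp (t * ∑ i, (z i + a i) ^ 2))
      (Measure.pi fun _ => gaussianReal 0 1) := by
  refine .of_integral_ne_zero ?_
  rw [integral_exp_mul_sum_sq_add_pi ht]
  have : 0 < 1 - 2 * t := by linarith
  positivity

theorem mgf_sum_sq_add_pi_le {t : ℝ} (ht0 : 0 ≤ t) (ht : t < 1 / 2) (a : ι → ℝ) :
    mgf (fun z : ι → ℝ => ∑ i, (z i + a i) ^ 2) (Measure.pi fun _ => gaussianReal 0 1) t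
      ≤ exp (t * (Fintype.card ι + ∑ i, a i ^ 2)
          + 2 * (Fintype.card ι + 2 * ∑ i, a i ^ 2) * t ^ 2 / (2 * (1 - 2 * t))) := by
  calc mgf (fun z : ι → ℝ => ∑ i, (z i + a i) ^ 2) (Measure.pi fun _ => gaussianReal 0 1) t
      = (√(1 - 2 * t))⁻¹ ^ Fintype.card ι * exp (t * (∑ i, a i ^ 2) / (1 - 2 * t)) :=
        integral_exp_mul_sum_sq_add_pi ht a
    _ ≤ exp (t + t ^ 2 / (1 - 2 * t)) ^ Fintype.card ι
          * exp (t * (∑ i, a i ^ 2) / (1 - 2 * t)) := by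
        gcongr
        exact inv_sqrt_one_sub_two_mul_le_exp ht0 ht
    _ = _ := by
        rw [← exp_nat_mul, ← exp_add]
        congr 1
        have hne : 1 - t * 2 ≠ 0 := by linarith
        field_simp
        ring

end Pi

/-- Upper tail bound for the noncentral chi-squared distribution with `n` degrees of
freedom and noncentrality `λ = ∑ i, a i ^ 2` (Birgé):
`P(χ²_n(λ) ≥ (n + λ) + 2√((n + 2λ) x) + 2x) ≤ exp (-x)`. -/
theorem noncentral_chiSq_upper_tail (n : ℕ) (hn : 0 < n) (a : Fin n → ℝ)
    (lam : ℝ) (hlam : lam = ∑ i, a i ^ 2) (x : ℝ) (hx : 0 ≤ x) :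
    stdGaussianPi n
        {z | ((n : ℝ) + lam) + 2 * Real.sqrt (((n : ℝ) + 2 * lam) * x) + 2 * x
              ≤ ∑ i, (z i + a i) ^ 2}
      ≤ ENNReal.ofReal (Real.exp (-x)) := by
  have hlam0 : 0 ≤ lam := hlam ▸ Finset.sum_nonneg fun i _ => sq_nonneg (a i)
  have hn' : (0 : ℝ) < n := Nat.cast_pos.mpr hn
  have hν : 0 < 2 * ((n : ℝ) + 2 * lam) := by positivity
  have hsqrt : √(2 * (2 * ((n : ℝ) + 2 * lam)) * x) = 2 * √(((n : ℝ) + 2 * lam) * x) := by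
    rw [show 2 * (2 * ((n : ℝ) + 2 * lam)) * x = 2 ^ 2 * ((n + 2 * lam) * x) by ring,
      sqrt_mul (by norm_num), sqrt_sq zero_le_two]
  have htail := measure_ge_le_exp_neg_of_subGamma_mgf (μ := stdGaussianPi n)
    (X := fun z => ∑ i, (z i + a i) ^ 2) (m := n + lam) hν zero_le_two hx
    (fun t _ ht => integrable_exp_mul_sum_sq_add_pi (by linarith) a)
    fun t ht0 ht => by
      simpa [hlam, stdGaussianPi] using mgf_sum_sq_add_pi_le ht0 (by linarith) a
  rwa [hsqrt] at htail
end

section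
/- Let n ≥ 1 and a ∈ ℝⁿ with λ := ∑_{i=1}^n a_i². Then the distribution of ∑_{i=1}^n (z_i + a_i)² equals the distribution of (z_1 + √λ)² + ∑_{i=2}^n z_i²; that is, the noncentral chi-squared distribution with n degrees of freedom and noncentrality λ is the law of the sum of an independent noncentral chi-squared variable with 1 degree of freedom and noncentrality λ and a central chi-squared variable with n−1 degrees of freedom. -/
/-!
Identify `ℝⁿ` with `EuclideanSpace ℝ (Fin n)`, under which the product of standard Gaussians
becomes the rotation-invariant `stdGaussian`. Then `∑ i, (z i + a i)² = ‖z + a‖²`, and the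
reflection exchanging `a` with `b = √λ • e₀` (both of norm `√λ`) preserves the law of `z` and
carries `‖z + b‖²` to `‖z + a‖²`.
-/

open MeasureTheory ProbabilityTheory

theorem map_norm_add_sq_stdGaussian_eq {E : Type*} [NormedAddCommGroup E]
    [InnerProductSpace ℝ E] [FiniteDimensional ℝ E] [MeasurableSpace E] [BorelSpace E]
    {u v : E} (h : ‖u‖ = ‖v‖) :
    (stdGaussian E).map (fun x => ‖x + u‖ ^ 2) = (stdGaussian E).map (fun x => ‖x + v‖ ^ 2) := by
  set e : E ≃ₗᵢ[ℝ] E := Submodule.reflection (ℝ ∙ (v - u))ᗮ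
  have hev : e v = u := Submodule.reflection_sub h.symm
  conv_lhs => rw [← stdGaussian_map e]
  rw [Measure.map_map (by fun_prop) (by fun_prop)]
  congr 1
  funext x
  simp only [Function.comp_apply, ← hev, ← map_add, LinearIsometryEquiv.norm_map]

theorem stdGaussianPi_eq_map_ofLp (n : ℕ) :
    stdGaussianPi n = (stdGaussian (EuclideanSpace ℝ (Fin n))).map WithLp.ofLp := by
  rw [← map_pi_eq_stdGaussian, Measure.map_map (by fun_prop) (by fun_prop)]
  exact Measure.map_id.symm

theorem EuclideanSpace.norm_add_toLp_sq {ι : Type*} [Fintype ι] (x : EuclideanSpace ℝ ι)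
    (a : ι → ℝ) : ‖x + WithLp.toLp 2 a‖ ^ 2 = ∑ i, (x i + a i) ^ 2 := by
  simp [EuclideanSpace.real_norm_sq_eq]

theorem map_stdGaussianPi_sum_add_sq (n : ℕ) (a : Fin n → ℝ) :
    (stdGaussianPi n).map (fun z => ∑ i, (z i + a i) ^ 2)
      = (stdGaussian (EuclideanSpace ℝ (Fin n))).map (fun x => ‖x + WithLp.toLp 2 a‖ ^ 2) := by
  rw [stdGaussianPi_eq_map_ofLp, Measure.map_map (by fun_prop) (by fun_prop)]
  congr 1
  funext x
  exact (EuclideanSpace.norm_add_toLp_sq x a).symm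

theorem sum_add_single_sq {ι R : Type*} [Fintype ι] [DecidableEq ι] [Semiring R] (z : ι → R)
    (i₀ : ι) (c : R) :
    ∑ i, (z i + (Pi.single i₀ c : ι → R) i) ^ 2
      = (z i₀ + c) ^ 2 + ∑ i ∈ Finset.univ.erase i₀, z i ^ 2 := by
  rw [← Finset.add_sum_erase _ _ (Finset.mem_univ i₀)]
  congr 1
  · simp
  · exact Finset.sum_congr rfl fun i hi => by simp [Finset.ne_of_mem_erase hi]

/-- Decomposition of the noncentral chi-squared distribution: `χ²_n(λ)` is distributed as
`χ²_1(λ) + χ²_{n-1}(0)`, i.e. the law of `∑ i, (z i + a i)²` equals that of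
`(z 0 + √λ)² + ∑_{i ≠ 0} (z i)²`. -/
theorem noncentral_chiSq_decomposition (n : ℕ) (hn : 0 < n) (a : Fin n → ℝ)
    (lam : ℝ) (hlam : lam = ∑ i, a i ^ 2) :
    Measure.map (fun z => ∑ i, (z i + a i) ^ 2) (stdGaussianPi n)
      = Measure.map
          (fun z => (z ⟨0, hn⟩ + Real.sqrt lam) ^ 2
              + ∑ i ∈ Finset.univ.erase ⟨0, hn⟩, z i ^ 2)
          (stdGaussianPi n) := by
  set b : Fin n → ℝ := Pi.single ⟨0, hn⟩ (Real.sqrt lam)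
  have hnorm : ‖WithLp.toLp 2 a‖ = ‖WithLp.toLp 2 b‖ := by
    have hb : ∑ i, b i ^ 2 = lam := by
      have hlam0 : 0 ≤ lam := hlam ▸ Finset.sum_nonneg fun i _ => sq_nonneg _
      simpa [hlam0] using sum_add_single_sq (0 : Fin n → ℝ) ⟨0, hn⟩ (Real.sqrt lam)
    rw [← sq_eq_sq₀ (norm_nonneg _) (norm_nonneg _), EuclideanSpace.real_norm_sq_eq,
      EuclideanSpace.real_norm_sq_eq]
    simpa [hb] using hlam.symm
  have hrhs : (fun z : Fin n → ℝ => (z ⟨0, hn⟩ + Real.sqrt lam) ^ 2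
      + ∑ i ∈ Finset.univ.erase ⟨0, hn⟩, z i ^ 2) = fun z => ∑ i, (z i + b i) ^ 2 :=
    funext fun z => (sum_add_single_sq z _ _).symm
  rw [hrhs, map_stdGaussianPi_sum_add_sq, map_stdGaussianPi_sum_add_sq]
  exact map_norm_add_sq_stdGaussian_eq hnorm
end

section
/- Let n be a positive integer, let 0 ≤ μ ≤ 1 and ε > 0 be real numbers with μ + ε ≤ 1, and let S_n(μ) be a binomial random variable with n trials and success probability μ. Then P(S_n(μ) ≥ n(μ + ε)) ≤ exp(−n ε² / (2 · MaxVar[μ, μ + ε])), where MaxVar[a, b] := sup_{p ∈ [a, b]} p(1 − p). -/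
/-! Markov's inequality for `t ^ S_n(μ)`, with the optimal `t = q (1 - μ) / (μ (1 - q))`, gives
`P(S_n(μ) ≥ n q) ≤ exp (-n KL(q ‖ μ))`. The relative entropy is `ℓ q - ℓ μ` for the
log-likelihood `ℓ x = q log x + (1 - q) log (1 - x)`, whose derivative `(q - x) / (x (1 - x))`
is at least `(q - x) / MaxVar[μ, q]` on `[μ, q]`; integrating,
`KL(q ‖ μ) ≥ (q - μ)² / (2 MaxVar[μ, q])`. -/

open MeasureTheory ProbabilityTheory

/-- `MaxVar[a, b]`: the maximal Bernoulli variance `p (1 - p)` over `p ∈ [a, b]`. -/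
noncomputable def maxVar (a b : ℝ) : ℝ :=
  sSup ((fun p => p * (1 - p)) '' Set.Icc a b)

open Finset Real

noncomputable def binomialTail (p a : ℝ) (n : ℕ) : ℝ :=
  ∑ i ∈ (range (n + 1)).filter (fun i : ℕ => a ≤ i), p ^ i * (1 - p) ^ (n - i) * n.choose i

/-- At `q = 1` the junk value `log 0 = 0` makes the second term vanish, as `0 log 0 = 0` should. -/
noncomputable def bernoulliKL (q p : ℝ) : ℝ :=
  q * log (q / p) + (1 - q) * log ((1 - q) / (1 - p))

theorem PMF.binomial_toMeasure_setOf_le {p : ℝ} (hp0 : 0 ≤ p) (hp1 : p ≤ 1) (n : ℕ) (a : ℝ) :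
    (PMF.binomial p.toNNReal (toNNReal_le_one.mpr hp1) n).toMeasure {i | a ≤ ((i : ℕ) : ℝ)} =
      ENNReal.ofReal (binomialTail p a n) := by
  have h1p : 0 ≤ 1 - p := sub_nonneg.2 hp1
  have hterm (i : ℕ) : 0 ≤ p ^ i * (1 - p) ^ (n - i) * n.choose i := by positivity
  rw [PMF.toMeasure_apply_fintype, binomialTail, sum_filter,
    ENNReal.ofReal_sum_of_nonneg fun i _ => by split_ifs <;> simp [hterm],
    ← Fin.sum_univ_eq_sum_range (fun i => ENNReal.ofReal (if a ≤ (i : ℝ) then _ else 0))]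
  refine sum_congr rfl fun i _ => ?_
  simp only [Set.indicator_apply, Set.mem_ofPred_eq]
  split_ifs
  · rw [PMF.binomial_apply, Fin.val_last, ENNReal.ofReal_mul (by positivity),
      ENNReal.ofReal_mul (by positivity), ENNReal.ofReal_pow hp0, ENNReal.ofReal_pow h1p,
      ENNReal.ofReal_sub 1 hp0, ENNReal.ofReal_one, ENNReal.ofReal_natCast]
    rfl
  · exact ENNReal.ofReal_zero.symm

theorem binomialTail_zero_left {a : ℝ} (ha : 0 < a) (n : ℕ) : binomialTail 0 a n = 0 := by
  refine sum_eq_zero fun i hi => ?_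
  have : i ≠ 0 := by rintro rfl; simp at hi; linarith
  simp [this]

theorem binomialTail_natCast_self (p : ℝ) (n : ℕ) : binomialTail p n n = p ^ n := by
  have : (range (n + 1)).filter (n ≤ ·) = {n} := by
    ext i; simp only [mem_filter, mem_range, mem_singleton]; omega
  simp only [binomialTail, Nat.cast_le, this, sum_singleton, Nat.sub_self, pow_zero,
    Nat.choose_self, Nat.cast_one, mul_one]

theorem binomialTail_le_div_rpow {p : ℝ} (hp0 : 0 ≤ p) (hp1 : p ≤ 1) (n : ℕ) (a : ℝ) {t : ℝ}
    (ht : 1 ≤ t) : binomialTail p a n ≤ (p * t + (1 - p)) ^ n / t ^ a := by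
  have ht0 : 0 < t := by linarith
  have h1p : 0 ≤ 1 - p := sub_nonneg.2 hp1
  have hterm (i : ℕ) : 0 ≤ p ^ i * (1 - p) ^ (n - i) * n.choose i := by positivity
  calc binomialTail p a n
      ≤ ∑ i ∈ (range (n + 1)).filter (fun i : ℕ => a ≤ i),
          p ^ i * (1 - p) ^ (n - i) * n.choose i * (t ^ i / t ^ a) := by
        refine sum_le_sum fun i hi => le_mul_of_one_le_right (hterm i) ?_
        rw [one_le_div (rpow_pos_of_pos ht0 a), ← rpow_natCast]
        exact rpow_le_rpow_of_exponent_le ht (mem_filter.mp hi).2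
    _ ≤ ∑ i ∈ range (n + 1), p ^ i * (1 - p) ^ (n - i) * n.choose i * (t ^ i / t ^ a) :=
        sum_le_sum_of_subset_of_nonneg (filter_subset _ _) fun i _ _ => by
          have := hterm i; positivity
    _ = (p * t + (1 - p)) ^ n / t ^ a := by
        rw [add_pow, sum_div]
        refine sum_congr rfl fun i _ => by ring

theorem binomialTail_le_exp_neg_bernoulliKL {p q : ℝ} (hp : 0 < p) (hpq : p < q) (hq : q ≤ 1)
    (n : ℕ) : binomialTail p (n * q) n ≤ exp (-(n * bernoulliKL q p)) := by
  rcases hq.lt_or_eq with hq | rfl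
  · have h1p : 0 < 1 - p := by linarith
    have h1q : 0 < 1 - q := by linarith
    have hqp : 0 < q / p := div_pos (hp.trans hpq) hp
    have h1q1p : 0 < (1 - q) / (1 - p) := div_pos h1q h1p
    set t := (q / p) / ((1 - q) / (1 - p)) with ht_def
    have ht : 1 ≤ t := by
      rw [one_le_div h1q1p]
      exact ((div_le_one h1p).2 (by linarith)).trans ((one_le_div hp).2 hpq.le)
    have hbase : p * t + (1 - p) = exp (-log ((1 - q) / (1 - p))) := by
      rw [exp_neg, exp_log h1q1p, ht_def]
      field_simp
      ring
    calc binomialTail p (n * q) n ≤ (p * t + (1 - p)) ^ n / t ^ (n * q) :=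
          binomialTail_le_div_rpow hp.le (by linarith) n _ ht
      _ = exp (-(n * bernoulliKL q p)) := by
          rw [hbase, rpow_def_of_pos (by positivity), ← exp_nat_mul, ← exp_sub, ht_def,
            log_div hqp.ne' h1q1p.ne', bernoulliKL]
          ring_nf
  · rw [mul_one, binomialTail_natCast_self, bernoulliKL, sub_self, zero_mul, add_zero, one_mul,
      one_div, log_inv, mul_neg, neg_neg, exp_nat_mul, exp_log hp]

theorem bernoulliKL_eq_sub {p q : ℝ} (hp : 0 < p) (hp1 : p < 1) (hq : 0 < q) (hq1 : q ≤ 1) :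
    bernoulliKL q p =
      (q * log q + (1 - q) * log (1 - q)) - (q * log p + (1 - q) * log (1 - p)) := by
  rcases hq1.lt_or_eq with hq1 | rfl
  · rw [bernoulliKL, log_div hq.ne' hp.ne', log_div (by linarith) (by linarith)]
    ring
  · simp [bernoulliKL]

theorem sq_div_le_bernoulliKL {p q M : ℝ} (hp : 0 < p) (hpq : p < q) (hq : q ≤ 1)
    (hM : ∀ x ∈ Set.Icc p q, x * (1 - x) ≤ M) : (q - p) ^ 2 / (2 * M) ≤ bernoulliKL q p := by
  set g : ℝ → ℝ := fun x => q * log x + (1 - q) * log (1 - x) + (q - x) ^ 2 / (2 * M)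
  have hcont : ContinuousOn g (Set.Icc p q) := by
    have hlog_one_sub : ContinuousOn (fun x => (1 - q) * log (1 - x)) (Set.Icc p q) := by
      rcases hq.lt_or_eq with hq | rfl
      · have : ContinuousOn (fun x => log (1 - x)) (Set.Icc p q) :=
          ContinuousOn.log (by fun_prop) fun x hx => (sub_pos.2 (hx.2.trans_lt hq)).ne'
        exact continuousOn_const.mul this
      · simpa using continuousOn_const
    refine ((continuousOn_const.mul (continuousOn_id.log fun x hx => ?_)).add
      hlog_one_sub).add (by fun_prop)
    exact (hp.trans_le hx.1).ne'
  have hderiv : ∀ x ∈ Set.Ioo p q, HasDerivAt g ((q - x) / (x * (1 - x)) - (q - x) / M) x := by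
    rintro x ⟨hpx, hxq⟩
    have hx0 : x ≠ 0 := (hp.trans hpx).ne'
    have hx1 : 1 - x ≠ 0 := by linarith
    have hM0 : M ≠ 0 := by
      have := hM x ⟨hpx.le, hxq.le⟩
      have : 0 < x * (1 - x) := mul_pos (hp.trans hpx) (by linarith)
      linarith
    have h := (((hasDerivAt_log hx0).const_mul q).add
      (((hasDerivAt_id' x).const_sub 1).log hx1 |>.const_mul (1 - q))).add
      ((((hasDerivAt_id' x).const_sub q).pow 2).div_const (2 * M))
    refine h.congr_deriv ?_
    field_simp
    ring
  have hmono : MonotoneOn g (Set.Icc p q) := by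
    refine monotoneOn_of_hasDerivWithinAt_nonneg (convex_Icc p q) hcont
      (f' := fun x => (q - x) / (x * (1 - x)) - (q - x) / M)
      (fun x hx => ?_) fun x hx => ?_ <;> rw [interior_Icc] at hx
    · exact (hderiv x hx).hasDerivWithinAt
    · have hvar : 0 < x * (1 - x) := mul_pos (hp.trans hx.1) (by linarith [hx.2])
      exact sub_nonneg.2 <| div_le_div_of_nonneg_left (by linarith [hx.2]) hvar
        (hM x ⟨hx.1.le, hx.2.le⟩)
  have hgpq := hmono (Set.left_mem_Icc.2 hpq.le) (Set.right_mem_Icc.2 hpq.le) hpq.le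
  simp only [g, sub_self, zero_pow two_ne_zero, zero_div, add_zero] at hgpq
  rw [bernoulliKL_eq_sub hp (hpq.trans_le hq) (hp.trans hpq) hq]
  linarith

theorem mul_one_sub_le_maxVar {a b x : ℝ} (hx : x ∈ Set.Icc a b) : x * (1 - x) ≤ maxVar a b :=
  le_csSup ⟨1 / 4, by rintro _ ⟨y, -, rfl⟩; nlinarith [sq_nonneg (2 * y - 1)]⟩ ⟨x, hx, rfl⟩

/-- Relative-entropy Chernoff bound (upper tail) for the binomial distribution:
`P(S_n(μ) ≥ n (μ + ε)) ≤ exp (-n ε² / (2 MaxVar[μ, μ + ε]))`. -/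
theorem binomial_chernoff_upper (n : ℕ) (hn : 0 < n) (μ ε : ℝ)
    (hμ0 : 0 ≤ μ) (hμ1 : μ ≤ 1) (hε : 0 < ε) (hμε : μ + ε ≤ 1) :
    (PMF.binomial (Real.toNNReal μ) (Real.toNNReal_le_one.mpr hμ1) n).toMeasure
        {i | (n : ℝ) * (μ + ε) ≤ (i : ℕ)}
      ≤ ENNReal.ofReal
          (Real.exp (-((n : ℝ) * ε ^ 2 / (2 * maxVar μ (μ + ε))))) := by
  rw [PMF.binomial_toMeasure_setOf_le hμ0 hμ1]
  refine ENNReal.ofReal_le_ofReal ?_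
  rcases hμ0.eq_or_lt with rfl | hμ
  · rw [binomialTail_zero_left (by positivity)]
    positivity
  have hKL := sq_div_le_bernoulliKL hμ (lt_add_of_pos_right μ hε) hμε
    fun x hx => mul_one_sub_le_maxVar hx
  rw [add_sub_cancel_left] at hKL
  calc binomialTail μ (n * (μ + ε)) n ≤ exp (-(n * bernoulliKL (μ + ε) μ)) :=
        binomialTail_le_exp_neg_bernoulliKL hμ (by linarith) hμε n
    _ ≤ exp (-(n * ε ^ 2 / (2 * maxVar μ (μ + ε)))) := by
        rw [mul_div_assoc]
        gcongr
end

section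
/- Let n be a positive integer, let 0 ≤ μ ≤ 1 and ε > 0 be real numbers with μ − ε ≥ 0, and let S_n(μ) be a binomial random variable with n trials and success probability μ. Then P(S_n(μ) ≤ n(μ − ε)) ≤ exp(−n ε² / (2 · MaxVar[μ − ε, μ])), where MaxVar[a, b] := sup_{p ∈ [a, b]} p(1 − p). -/
/-!
With `V = MaxVar[μ - ε, μ]`, Chernoff's bound with exponent `T = ε / V` gives
`P(S ≤ n (μ - ε)) ≤ exp (T n (μ - ε)) (μ e^{-T} + 1 - μ)^n`. The log-mgf
`ψ(t) = log (μ e^{-t} + 1 - μ)` has `ψ' = -p_t`, where `p_t` is the tilted success probability,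
and `logit p_t = logit μ - t`. Since `logit' = 1 / (p (1 - p)) ≥ 1 / V` on `[μ - ε, μ]`
(checked at the midpoint through the Padé bound `log x - log y ≥ 2 (x - y) / (x + y)`),
`μ - p_t ≤ V t` for `t ≤ T`. Integrating, `ψ(T) ≤ -μ T + V T² / 2`, and the exponent
collapses to `-n ε² / (2 V)`.
-/

open MeasureTheory ProbabilityTheory

open Real Set

lemma two_mul_sub_div_add_le_log_sub_log {x y : ℝ} (hy : 0 < y) (hyx : y ≤ x) :
    2 * (x - y) / (x + y) ≤ log x - log y := by
  have hx : 0 < x := hy.trans_le hyx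
  set z := (x - y) / (x + y) with hz
  have hz0 : 0 ≤ z := div_nonneg (by linarith) (by linarith)
  have hz1 : z < 1 := (div_lt_one (by linarith)).2 (by linarith)
  have hseries := hasSum_log_sub_log_of_abs_lt_one (abs_lt.2 ⟨by linarith, hz1⟩)
  have hlog : log (1 + z) - log (1 - z) = log x - log y := by
    rw [show 1 + z = 2 * x / (x + y) by rw [hz]; field_simp; ring,
      show 1 - z = 2 * y / (x + y) by rw [hz]; field_simp; ring,
      log_div (by positivity) (by positivity), log_div (by positivity) (by positivity),
      log_mul two_ne_zero hx.ne', log_mul two_ne_zero hy.ne']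
    ring
  have := le_hasSum hseries 0 fun k _ => by positivity
  rw [hlog] at this
  simpa [z, mul_div_assoc] using this

noncomputable def logit (p : ℝ) : ℝ := log (p / (1 - p))

lemma logit_lt_logit {p q : ℝ} (hp : 0 < p) (hpq : p < q) (hq : q < 1) : logit p < logit q := by
  unfold logit
  have : 0 < 1 - p := by linarith
  have : 0 < 1 - q := by linarith
  gcongr
  linarith

lemma sub_le_mul_logit_sub {p μ V : ℝ} (hp : 0 < p) (hpμ : p ≤ μ) (hμ : μ < 1)
    (hV : (p + μ) / 2 * (1 - (p + μ) / 2) ≤ V) :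
    μ - p ≤ V * (logit μ - logit p) := by
  set m := (p + μ) / 2 with hm_def
  have hm : 0 < m * (1 - m) := mul_pos (by rw [hm_def]; linarith) (by rw [hm_def]; linarith)
  have hlogit : (μ - p) / (m * (1 - m)) ≤ logit μ - logit p := by
    have h₁ := two_mul_sub_div_add_le_log_sub_log hp hpμ
    have h₂ := two_mul_sub_div_add_le_log_sub_log (sub_pos.2 hμ) (by linarith : 1 - μ ≤ 1 - p)
    have hsplit : logit μ - logit p = (log μ - log p) + (log (1 - p) - log (1 - μ)) := by
      unfold logit
      rw [log_div (by linarith) (by linarith), log_div (by linarith) (by linarith)]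
      ring
    have hmid : (μ - p) / (m * (1 - m))
        = 2 * (μ - p) / (μ + p) + 2 * ((1 - p) - (1 - μ)) / ((1 - p) + (1 - μ)) := by
      rw [div_add_div _ _ (by linarith) (by linarith), div_eq_div_iff hm.ne' (by nlinarith), hm_def]
      ring
    linarith
  calc μ - p = m * (1 - m) * ((μ - p) / (m * (1 - m))) := by rw [mul_div_cancel₀ _ hm.ne']
    _ ≤ V * (logit μ - logit p) :=
      mul_le_mul hV hlogit (div_nonneg (by linarith) hm.le) (hm.le.trans hV)

/-- The success probability of Bernoulli(`μ`) reweighted by `exp (-t x)`. -/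
noncomputable def tiltedProb (μ t : ℝ) : ℝ := μ * exp (-t) / (μ * exp (-t) + (1 - μ))

lemma logit_tiltedProb {μ : ℝ} (hμ0 : 0 < μ) (hμ1 : μ < 1) (t : ℝ) :
    logit (tiltedProb μ t) = logit μ - t := by
  unfold logit tiltedProb
  have hD : 0 < μ * exp (-t) + (1 - μ) := by have := exp_pos (-t); positivity
  rw [show μ * exp (-t) / (μ * exp (-t) + (1 - μ)) / (1 - μ * exp (-t) / (μ * exp (-t) + (1 - μ)))
      = μ / (1 - μ) * exp (-t) by field_simp; ring,
    log_mul (by positivity) (exp_pos _).ne', log_exp]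
  ring

lemma tiltedProb_pos {μ : ℝ} (hμ0 : 0 < μ) (hμ1 : μ ≤ 1) (t : ℝ) : 0 < tiltedProb μ t := by
  unfold tiltedProb
  have : 0 ≤ 1 - μ := by linarith
  positivity

lemma tiltedProb_lt_one {μ : ℝ} (hμ0 : 0 < μ) (hμ1 : μ < 1) (t : ℝ) : tiltedProb μ t < 1 := by
  unfold tiltedProb
  rw [div_lt_one (by have := exp_pos (-t); positivity)]
  linarith

lemma tiltedProb_one (t : ℝ) : tiltedProb 1 t = 1 := by
  simp [tiltedProb]

lemma sub_tiltedProb_le {q μ V t : ℝ} (hV : ∀ p ∈ Icc q μ, p * (1 - p) ≤ V) (hV0 : 0 < V)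
    (hμ0 : 0 < μ) (hμ1 : μ ≤ 1) (ht0 : 0 ≤ t) (ht : V * t ≤ μ - q) :
    μ - tiltedProb μ t ≤ V * t := by
  rcases hμ1.lt_or_eq with hμ1 | rfl
  swap
  · rw [tiltedProb_one, sub_self]; positivity
  set p := tiltedProb μ t
  have hp0 : 0 < p := tiltedProb_pos hμ0 hμ1.le t
  have hp1 : p < 1 := tiltedProb_lt_one hμ0 hμ1 t
  have hlogit : logit μ - logit p = t := by rw [logit_tiltedProb hμ0 hμ1]; ring
  have hpμ : p ≤ μ := by
    by_contra! h
    linarith [logit_lt_logit hμ0 h hp1]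
  have hqp : q ≤ p := by
    by_contra! h
    have hqμ : q ≤ μ := by nlinarith
    have hq := sub_le_mul_logit_sub (hp0.trans h) hqμ hμ1
      (hV _ ⟨by linarith, by linarith⟩)
    have := logit_lt_logit hp0 h (hqμ.trans_lt hμ1)
    nlinarith
  calc μ - p ≤ V * (logit μ - logit p) :=
        sub_le_mul_logit_sub hp0 hpμ hμ1 (hV _ ⟨by linarith, by linarith⟩)
    _ = V * t := by rw [hlogit]

lemma hasDerivAt_log_bernoulli_mgf_neg {μ : ℝ} (hμ0 : 0 < μ) (hμ1 : μ ≤ 1) (t : ℝ) :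
    HasDerivAt (fun t => log (μ * exp (-t) + (1 - μ))) (-tiltedProb μ t) t := by
  have hD : 0 < μ * exp (-t) + (1 - μ) := by have := exp_pos (-t); nlinarith
  have := (((hasDerivAt_neg t).exp.const_mul μ).add_const (1 - μ)).log hD.ne'
  convert this using 1
  simp only [tiltedProb, mul_neg, mul_one]
  ring

lemma bernoulli_mgf_neg_le {μ V T : ℝ} (hμ0 : 0 < μ) (hμ1 : μ ≤ 1) (hT : 0 ≤ T)
    (h : ∀ t ∈ Icc 0 T, μ - tiltedProb μ t ≤ V * t) :
    μ * exp (-T) + (1 - μ) ≤ exp (-(μ * T) + V * T ^ 2 / 2) := by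
  set f := fun t => -(μ * t) + V * t ^ 2 / 2 - log (μ * exp (-t) + (1 - μ))
  have hf : ∀ t, HasDerivAt f (-μ + V * t + tiltedProb μ t) t := fun t => by
    refine ((((hasDerivAt_id t).const_mul μ).neg.add
      (((hasDerivAt_pow 2 t).const_mul V).div_const 2)).sub
      (hasDerivAt_log_bernoulli_mgf_neg hμ0 hμ1 t)).congr_deriv ?_
    ring
  have hmono : MonotoneOn f (Icc 0 T) := by
    refine monotoneOn_of_deriv_nonneg (convex_Icc 0 T)
      (fun t _ => (hf t).continuousAt.continuousWithinAt)
      (fun t _ => (hf t).differentiableAt.differentiableWithinAt) fun t ht => ?_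
    rw [(hf t).deriv]
    linarith [h t (interior_subset ht)]
  have hD : 0 < μ * exp (-T) + (1 - μ) := by have := exp_pos (-T); nlinarith
  have hf0 : f 0 = 0 := by simp [f]
  have hfT : 0 ≤ f T := hf0 ▸ hmono (left_mem_Icc.2 hT) (right_mem_Icc.2 hT) hT
  rw [← exp_log hD]
  gcongr
  simp only [f] at hfT
  linarith

lemma mgf_binomial (p : NNReal) (hp : p ≤ 1) (n : ℕ) (t : ℝ) :
    mgf (fun i : Fin (n + 1) => ((i : ℕ) : ℝ)) (PMF.binomial p hp n).toMeasure t
      = ((p : ℝ) * exp t + (1 - p)) ^ n := by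
  rw [mgf, PMF.integral_eq_sum, add_pow, ← Fin.sum_univ_eq_sum_range]
  refine Finset.sum_congr rfl fun i _ => ?_
  simp only [PMF.binomial_apply, Fin.val_last, ENNReal.toReal_mul, ENNReal.toReal_pow,
    ENNReal.coe_toReal, ENNReal.toReal_sub_of_le (ENNReal.coe_le_one_iff.2 hp) ENNReal.one_ne_top,
    ENNReal.toReal_one, ENNReal.toReal_natCast, smul_eq_mul, mul_pow, ← exp_nat_mul, mul_comm t]
  ring

lemma le_maxVar {a b p : ℝ} (hp : p ∈ Icc a b) : p * (1 - p) ≤ maxVar a b :=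
  le_csSup (isCompact_Icc.image (by fun_prop)).bddAbove (mem_image_of_mem _ hp)

lemma maxVar_pos {a b : ℝ} (ha : 0 ≤ a) (hab : a < b) (hb : b ≤ 1) : 0 < maxVar a b :=
  (mul_pos (by linarith) (by linarith)).trans_le
    (le_maxVar (p := (a + b) / 2) ⟨by linarith, by linarith⟩)

theorem binomial_chernoff_lower_general (n : ℕ) (μ ε : ℝ)
    (hμ0 : 0 ≤ μ) (hμ1 : μ ≤ 1) (hε : 0 < ε) (hμε : 0 ≤ μ - ε) :
    (PMF.binomial (Real.toNNReal μ) (Real.toNNReal_le_one.mpr hμ1) n).toMeasure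
        {i | ((i : ℕ) : ℝ) ≤ (n : ℝ) * (μ - ε)}
      ≤ ENNReal.ofReal
          (Real.exp (-((n : ℝ) * ε ^ 2 / (2 * maxVar (μ - ε) μ)))) := by
  set V := maxVar (μ - ε) μ
  have hV0 : 0 < V := maxVar_pos hμε (by linarith) hμ1
  set T := ε / V
  have hT0 : 0 ≤ T := by positivity
  have hT : V * T = ε := mul_div_cancel₀ ε hV0.ne'
  have hmgf := bernoulli_mgf_neg_le (by linarith) hμ1 hT0 fun t ht =>
    sub_tiltedProb_le (fun p => le_maxVar) hV0 (by linarith) hμ1 ht.1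
      (by nlinarith [ht.2])
  rw [ENNReal.le_ofReal_iff_toReal_le (measure_ne_top _ _) (exp_pos _).le, ← measureReal_def]
  calc _ ≤ exp (-(-T) * (n * (μ - ε)))
        * mgf (fun i : Fin (n + 1) => ((i : ℕ) : ℝ)) _ (-T) :=
        measure_le_le_exp_mul_mgf _ (by linarith) .of_finite
    _ = exp (T * (n * (μ - ε))) * (μ * exp (-T) + (1 - μ)) ^ n := by
        rw [mgf_binomial, Real.coe_toNNReal _ hμ0, neg_neg]
    _ ≤ exp (T * (n * (μ - ε))) * exp (-(μ * T) + V * T ^ 2 / 2) ^ n := by gcongr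
    _ = exp (-(n * ε ^ 2 / (2 * V))) := by
        rw [← exp_nat_mul, ← exp_add]
        congr 1
        rw [← hT]
        field_simp
        ring

/-- Relative-entropy Chernoff bound (lower tail) for the binomial distribution:
`P(S_n(μ) ≤ n (μ - ε)) ≤ exp (-n ε² / (2 MaxVar[μ - ε, μ]))`. -/
theorem binomial_chernoff_lower (n : ℕ) (hn : 0 < n) (μ ε : ℝ)
    (hμ0 : 0 ≤ μ) (hμ1 : μ ≤ 1) (hε : 0 < ε) (hμε : 0 ≤ μ - ε) :
    (PMF.binomial (Real.toNNReal μ) (Real.toNNReal_le_one.mpr hμ1) n).toMeasure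
        {i | ((i : ℕ) : ℝ) ≤ (n : ℝ) * (μ - ε)}
      ≤ ENNReal.ofReal
          (Real.exp (-((n : ℝ) * ε ^ 2 / (2 * maxVar (μ - ε) μ)))) :=
  binomial_chernoff_lower_general n μ ε hμ0 hμ1 hε hμε
end

section
/- Let Σ and Σ̂ be real n×n matrices with Σ invertible and ‖Σ − Σ̂‖_F ≤ (1/2) · ‖Σ⁻¹‖₂⁻¹ (so that Σ̂ is invertible), and let μ, μ̂, x ∈ ℝⁿ. Define l(x) := (x − μ̂)ᵀ Σ̂⁻¹ (x − μ̂) and l*(x) := (x − μ)ᵀ Σ⁻¹ (x − μ). Then |l(x) − l*(x)| ≤ 2 ‖Σ⁻¹‖₂² · ‖x − μ‖² · ‖Σ − Σ̂‖_F + 4 ‖Σ⁻¹‖₂ · ‖x − μ‖ · ‖μ − μ̂‖ + 2 ‖Σ⁻¹‖₂ · ‖μ − μ̂‖², where ‖v‖ denotes the Euclidean norm of a vector v. -/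
/-!
Write `Σ̂ = Σ (1 - Σ⁻¹ (Σ - Σ̂))`. Since `‖Σ⁻¹‖₂ ‖Σ - Σ̂‖₂ ≤ ‖Σ⁻¹‖₂ ‖Σ - Σ̂‖_F ≤ 1/2`, the Neumann
series makes `Σ̂` invertible, and the identity `Σ̂⁻¹ - Σ⁻¹ = Σ̂⁻¹ (Σ - Σ̂) Σ⁻¹` gives first
`‖Σ̂⁻¹‖₂ ≤ 2 ‖Σ⁻¹‖₂` and then `‖Σ̂⁻¹ - Σ⁻¹‖₂ ≤ 2 ‖Σ⁻¹‖₂² ‖Σ - Σ̂‖₂`. Splitting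
`x - μ̂ = (x - μ) + (μ - μ̂)` turns `l(x) - l*(x)` into four bilinear terms, one with the matrix
`Σ̂⁻¹ - Σ⁻¹` and three with `Σ̂⁻¹`, each bounded by Cauchy–Schwarz and the operator norm.
-/

open MeasureTheory

/-- The spectral (L2 operator) norm of a real square matrix. -/
noncomputable def matSpectralNorm {n : ℕ} (M : Matrix (Fin n) (Fin n) ℝ) : ℝ :=
  ‖Matrix.toEuclideanCLM (𝕜 := ℝ) M‖

/-- The Frobenius norm of a real square matrix. -/
noncomputable def frobNorm {n : ℕ} (M : Matrix (Fin n) (Fin n) ℝ) : ℝ :=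
  Real.sqrt (∑ i, ∑ j, M i j ^ 2)

/-- The Euclidean norm of a vector in `ℝⁿ`. -/
noncomputable def eNorm {n : ℕ} (v : Fin n → ℝ) : ℝ :=
  Real.sqrt (∑ i, v i ^ 2)

/-- The bilinear form `uᵀ M v`. -/
def quadForm {n : ℕ} (u : Fin n → ℝ) (M : Matrix (Fin n) (Fin n) ℝ)
    (v : Fin n → ℝ) : ℝ :=
  ∑ i, ∑ j, u i * M i j * v j

open scoped Ring RealInnerProductSpace

section PerturbationOfInverse

variable {R : Type*} [NormedRing R] {a b : R}

theorem norm_inverse_sub_inverse_le_mul (ha : IsUnit a) (hb : IsUnit b) :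
    ‖b⁻¹ʳ - a⁻¹ʳ‖ ≤ ‖a⁻¹ʳ‖ * ‖a - b‖ * ‖b⁻¹ʳ‖ := by
  rw [Ring.inverse_sub_inverse (iff_of_true hb ha)]
  calc ‖b⁻¹ʳ * (a - b) * a⁻¹ʳ‖ ≤ ‖b⁻¹ʳ‖ * ‖a - b‖ * ‖a⁻¹ʳ‖ := norm_mul₃_le
    _ = ‖a⁻¹ʳ‖ * ‖a - b‖ * ‖b⁻¹ʳ‖ := by ring

variable [HasSummableGeomSeries R]

theorem isUnit_of_norm_inverse_mul_norm_sub_lt_one (ha : IsUnit a)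
    (h : ‖a⁻¹ʳ‖ * ‖a - b‖ < 1) : IsUnit b := by
  have hb : b = a * (1 - a⁻¹ʳ * (a - b)) := by
    rw [mul_sub, mul_one, ← mul_assoc, Ring.mul_inverse_cancel a ha, one_mul, sub_sub_cancel]
  rw [hb]
  exact ha.mul (Units.oneSub _ ((norm_mul_le _ _).trans_lt h)).isUnit

theorem norm_inverse_le_two_mul_of_norm_inverse_mul_norm_sub_le_half (ha : IsUnit a)
    (h : ‖a⁻¹ʳ‖ * ‖a - b‖ ≤ 1 / 2) : ‖b⁻¹ʳ‖ ≤ 2 * ‖a⁻¹ʳ‖ := by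
  have hb := isUnit_of_norm_inverse_mul_norm_sub_lt_one ha (h.trans_lt one_half_lt_one)
  have hdiff := norm_inverse_sub_inverse_le_mul ha hb
  have hmul := mul_le_mul_of_nonneg_right h (norm_nonneg b⁻¹ʳ)
  have htri := norm_le_norm_add_norm_sub' b⁻¹ʳ a⁻¹ʳ
  linarith

theorem norm_inverse_sub_inverse_le_of_norm_inverse_mul_norm_sub_le_half (ha : IsUnit a)
    (h : ‖a⁻¹ʳ‖ * ‖a - b‖ ≤ 1 / 2) :
    ‖b⁻¹ʳ - a⁻¹ʳ‖ ≤ 2 * ‖a⁻¹ʳ‖ ^ 2 * ‖a - b‖ := by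
  have hb := isUnit_of_norm_inverse_mul_norm_sub_lt_one ha (h.trans_lt one_half_lt_one)
  calc ‖b⁻¹ʳ - a⁻¹ʳ‖ ≤ ‖a⁻¹ʳ‖ * ‖a - b‖ * ‖b⁻¹ʳ‖ := norm_inverse_sub_inverse_le_mul ha hb
    _ ≤ ‖a⁻¹ʳ‖ * ‖a - b‖ * (2 * ‖a⁻¹ʳ‖) := by
        gcongr; exact norm_inverse_le_two_mul_of_norm_inverse_mul_norm_sub_le_half ha h
    _ = 2 * ‖a⁻¹ʳ‖ ^ 2 * ‖a - b‖ := by ring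

end PerturbationOfInverse

section InnerProduct

variable {E F : Type*} [NormedAddCommGroup E] [InnerProductSpace ℝ E]
  [NormedAddCommGroup F] [NormedSpace ℝ F]

theorem abs_real_inner_map_le (T : F →L[ℝ] E) (x : E) (y : F) :
    |⟪x, T y⟫| ≤ ‖T‖ * ‖x‖ * ‖y‖ :=
  calc |⟪x, T y⟫| ≤ ‖x‖ * ‖T y‖ := abs_real_inner_le_norm x (T y)
    _ ≤ ‖x‖ * (‖T‖ * ‖y‖) := by gcongr; exact T.le_opNorm y
    _ = ‖T‖ * ‖x‖ * ‖y‖ := by ring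

theorem abs_real_inner_map_add_sub_inner_map_le (T T' : E →L[ℝ] E) (u d : E) :
    |⟪u + d, T' (u + d)⟫ - ⟪u, T u⟫|
      ≤ ‖T' - T‖ * ‖u‖ ^ 2 + 2 * ‖T'‖ * ‖u‖ * ‖d‖ + ‖T'‖ * ‖d‖ ^ 2 := by
  have expand : ⟪u + d, T' (u + d)⟫ - ⟪u, T u⟫ =
      ⟪u, (T' - T) u⟫ + ⟪u, T' d⟫ + ⟪d, T' u⟫ + ⟪d, T' d⟫ := by
    simp only [map_add, inner_add_left, inner_add_right, sub_apply, inner_sub_right]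
    ring
  rw [expand]
  have := abs_add_le (⟪u, (T' - T) u⟫ + ⟪u, T' d⟫ + ⟪d, T' u⟫) ⟪d, T' d⟫
  have := abs_add_le (⟪u, (T' - T) u⟫ + ⟪u, T' d⟫) ⟪d, T' u⟫
  have := abs_add_le ⟪u, (T' - T) u⟫ ⟪u, T' d⟫
  have := abs_real_inner_map_le (T' - T) u u
  have := abs_real_inner_map_le T' u d
  have := abs_real_inner_map_le T' d u
  have := abs_real_inner_map_le T' d d
  linarith

end InnerProduct

section Matrix

open scoped Matrix.Norms.L2Operator

variable {n : ℕ}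

theorem matSpectralNorm_eq_norm (M : Matrix (Fin n) (Fin n) ℝ) : matSpectralNorm M = ‖M‖ := rfl

theorem eNorm_eq_norm_toLp (v : Fin n → ℝ) : eNorm v = ‖WithLp.toLp 2 v‖ := by
  simp only [eNorm, EuclideanSpace.norm_eq, Real.norm_eq_abs, sq_abs]

theorem quadForm_eq_inner (u : Fin n → ℝ) (M : Matrix (Fin n) (Fin n) ℝ) (v : Fin n → ℝ) :
    quadForm u M v = ⟪WithLp.toLp 2 u, Matrix.toEuclideanCLM (𝕜 := ℝ) M (WithLp.toLp 2 v)⟫ := by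
  rw [Matrix.inner_toEuclideanCLM]
  simp only [quadForm, dotProduct, Matrix.mulVec, Finset.mul_sum, mul_assoc]

theorem matSpectralNorm_le_frobNorm (M : Matrix (Fin n) (Fin n) ℝ) :
    matSpectralNorm M ≤ frobNorm M := by
  refine ContinuousLinearMap.opNorm_le_bound _ (Real.sqrt_nonneg _) fun x => ?_
  rw [EuclideanSpace.norm_eq, EuclideanSpace.norm_eq, frobNorm, ← Real.sqrt_mul (by positivity)]
  gcongr
  calc ∑ i, ‖(Matrix.toEuclideanCLM (𝕜 := ℝ) M x) i‖ ^ 2 = ∑ i, (∑ j, M i j * x j) ^ 2 := by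
        simp [Matrix.mulVec, dotProduct]
    _ ≤ ∑ i, (∑ j, M i j ^ 2) * ∑ j, ‖x j‖ ^ 2 := by
        gcongr with i
        simpa only [Real.norm_eq_abs, sq_abs] using Finset.sum_mul_sq_le_sq_mul_sq _ _ _
    _ = (∑ i, ∑ j, M i j ^ 2) * ∑ j, ‖x j‖ ^ 2 := by rw [Finset.sum_mul]

theorem abs_quadForm_add_sub_quadForm_le (u d : Fin n → ℝ) (A B : Matrix (Fin n) (Fin n) ℝ) :
    |quadForm (u + d) B (u + d) - quadForm u A u|
      ≤ matSpectralNorm (B - A) * eNorm u ^ 2 + 2 * matSpectralNorm B * eNorm u * eNorm d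
        + matSpectralNorm B * eNorm d ^ 2 := by
  simpa only [quadForm_eq_inner, eNorm_eq_norm_toLp, matSpectralNorm, map_sub, WithLp.toLp_add]
    using abs_real_inner_map_add_sub_inner_map_le (Matrix.toEuclideanCLM (𝕜 := ℝ) A)
      (Matrix.toEuclideanCLM (𝕜 := ℝ) B) (WithLp.toLp 2 u) (WithLp.toLp 2 d)

theorem matSpectralNorm_inv_le {S T : Matrix (Fin n) (Fin n) ℝ} (hS : IsUnit S)
    (h : matSpectralNorm S⁻¹ * matSpectralNorm (S - T) ≤ 1 / 2) :
    matSpectralNorm T⁻¹ ≤ 2 * matSpectralNorm S⁻¹ := by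
  simp only [matSpectralNorm_eq_norm, Matrix.nonsing_inv_eq_ringInverse] at h ⊢
  exact norm_inverse_le_two_mul_of_norm_inverse_mul_norm_sub_le_half hS h

theorem matSpectralNorm_inv_sub_inv_le {S T : Matrix (Fin n) (Fin n) ℝ} (hS : IsUnit S)
    (h : matSpectralNorm S⁻¹ * matSpectralNorm (S - T) ≤ 1 / 2) :
    matSpectralNorm (T⁻¹ - S⁻¹) ≤ 2 * matSpectralNorm S⁻¹ ^ 2 * matSpectralNorm (S - T) := by
  simp only [matSpectralNorm_eq_norm, Matrix.nonsing_inv_eq_ringInverse] at h ⊢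
  exact norm_inverse_sub_inverse_le_of_norm_inverse_mul_norm_sub_le_half hS h

end Matrix

/-- Perturbation bound for squared Mahalanobis distances: with
`l(x) = (x - μ̂)ᵀ Σ̂⁻¹ (x - μ̂)` and `l*(x) = (x - μ)ᵀ Σ⁻¹ (x - μ)`,
`|l(x) - l*(x)| ≤ 2‖Σ⁻¹‖₂² ‖x - μ‖² ‖Σ - Σ̂‖_F + 4‖Σ⁻¹‖₂ ‖x - μ‖ ‖μ - μ̂‖
  + 2‖Σ⁻¹‖₂ ‖μ - μ̂‖²`. -/
theorem mahalanobis_perturbation (n : ℕ) (S Shat : Matrix (Fin n) (Fin n) ℝ)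
    (hS : IsUnit S)
    (h : frobNorm (S - Shat) ≤ (1 / 2) * (matSpectralNorm S⁻¹)⁻¹)
    (μ μhat x : Fin n → ℝ) :
    |quadForm (x - μhat) Shat⁻¹ (x - μhat) - quadForm (x - μ) S⁻¹ (x - μ)|
      ≤ 2 * matSpectralNorm S⁻¹ ^ 2 * eNorm (x - μ) ^ 2 * frobNorm (S - Shat)
        + 4 * matSpectralNorm S⁻¹ * eNorm (x - μ) * eNorm (μ - μhat)
        + 2 * matSpectralNorm S⁻¹ * eNorm (μ - μhat) ^ 2 := by
  set s := matSpectralNorm S⁻¹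
  have hs : 0 ≤ s := norm_nonneg _
  have hE := matSpectralNorm_le_frobNorm (S - Shat)
  have hsE : s * matSpectralNorm (S - Shat) ≤ 1 / 2 :=
    calc s * matSpectralNorm (S - Shat) ≤ s * ((1 / 2) * s⁻¹) := by gcongr; exact hE.trans h
      _ = 1 / 2 * (s * s⁻¹) := by ring
      _ ≤ 1 / 2 := mul_le_of_le_one_right (by norm_num) mul_inv_le_one
  have hinv := matSpectralNorm_inv_le hS hsE
  have hdiff := matSpectralNorm_inv_sub_inv_le hS hsE
  have hu : 0 ≤ eNorm (x - μ) := Real.sqrt_nonneg _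
  have hd : 0 ≤ eNorm (μ - μhat) := Real.sqrt_nonneg _
  rw [show x - μhat = (x - μ) + (μ - μhat) by abel]
  calc _ ≤ matSpectralNorm (Shat⁻¹ - S⁻¹) * eNorm (x - μ) ^ 2
          + 2 * matSpectralNorm Shat⁻¹ * eNorm (x - μ) * eNorm (μ - μhat)
          + matSpectralNorm Shat⁻¹ * eNorm (μ - μhat) ^ 2 :=
        abs_quadForm_add_sub_quadForm_le _ _ _ _
    _ ≤ 2 * s ^ 2 * frobNorm (S - Shat) * eNorm (x - μ) ^ 2
          + 2 * (2 * s) * eNorm (x - μ) * eNorm (μ - μhat) + 2 * s * eNorm (μ - μhat) ^ 2 := by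
        gcongr
        exact hdiff.trans (mul_le_mul_of_nonneg_left hE (by positivity))
    _ = _ := by ring
end
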